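/- If f : ℝⁿ → ℝ is differentiable with L-Lipschitz gradient and is bounded below, then the gradient descent iterates x_{k+1} = x_k − (1/L)∇f(x_k) satisfy ∇f(x_k) → 0 as k → ∞. -/

import Mathlib

/-!
A gradient that is `L`-Lipschitz gives the descent lemma
`f (x + v) ≤ f x + ⟪∇f x, v⟫ + L / 2 * ‖v‖ ^ 2`, so a gradient step of length `1 / L` lowers `f`
by at least `‖∇f x‖ ^ 2 / (2 * L)`. As `f` is bounded below, these decreases telescope to a
finite sum: `∑ ‖∇f (x k)‖ ^ 2 < ∞`, and in particular `∇f (x k) → 0`.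
-/

open Filter Set

section Descent

variable {E : Type*} [NormedAddCommGroup E] [NormedSpace ℝ E] {f : E → ℝ} {L : ℝ}

theorem apply_add_le_of_norm_fderiv_sub_le (hf : Differentiable ℝ f)
    (hlip : ∀ x y, ‖fderiv ℝ f x - fderiv ℝ f y‖ ≤ L * ‖x - y‖) (x v : E) :
    f (x + v) ≤ f x + fderiv ℝ f x v + L / 2 * ‖v‖ ^ 2 := by
  -- `f` minus its quadratic upper model along the segment; the bound on `f'` makes it antitone.
  set φ : ℝ → ℝ := fun t => f (x + t • v) - t * fderiv ℝ f x v - L / 2 * t ^ 2 * ‖v‖ ^ 2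
  have hφ' : ∀ t, HasDerivAt φ
      ((fderiv ℝ f (x + t • v) - fderiv ℝ f x) v - L * t * ‖v‖ ^ 2) t := by
    intro t
    have hline : HasDerivAt (fun t : ℝ => x + t • v) v t := by
      simpa using ((hasDerivAt_id t).smul_const v).const_add x
    have := (((hf _).hasFDerivAt.comp_hasDerivAt t hline).sub
      ((hasDerivAt_id t).mul_const (fderiv ℝ f x v))).sub
      (((hasDerivAt_pow 2 t).const_mul (L / 2)).mul_const (‖v‖ ^ 2))
    refine this.congr_deriv ?_
    rw [sub_apply]
    ring
  have hφ'_nonpos : ∀ t ∈ interior (Ici (0 : ℝ)),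
      (fderiv ℝ f (x + t • v) - fderiv ℝ f x) v - L * t * ‖v‖ ^ 2 ≤ 0 := by
    intro t ht
    rw [interior_Ici, mem_Ioi] at ht
    rw [sub_nonpos]
    calc (fderiv ℝ f (x + t • v) - fderiv ℝ f x) v
        ≤ ‖fderiv ℝ f (x + t • v) - fderiv ℝ f x‖ * ‖v‖ :=
          (le_abs_self _).trans ((fderiv ℝ f (x + t • v) - fderiv ℝ f x).le_opNorm v)
      _ ≤ L * ‖t • v‖ * ‖v‖ := by
          gcongr
          simpa using hlip (x + t • v) x
      _ = L * t * ‖v‖ ^ 2 := by rw [norm_smul, Real.norm_of_nonneg ht.le]; ring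
  have hanti : AntitoneOn φ (Ici 0) :=
    antitoneOn_of_hasDerivWithinAt_nonpos (convex_Ici 0)
      (fun t _ => (hφ' t).continuousAt.continuousWithinAt)
      (fun t _ => (hφ' t).hasDerivWithinAt) hφ'_nonpos
  have := hanti self_mem_Ici (mem_Ici.mpr zero_le_one) zero_le_one
  norm_num [φ] at this
  linarith

end Descent

section Gradient

variable {E : Type*} [NormedAddCommGroup E] [InnerProductSpace ℝ E] [CompleteSpace E]
  {f : E → ℝ} {L : ℝ}

theorem norm_fderiv_sub_fderiv_eq_norm_gradient_sub_gradient (f : E → ℝ) (x y : E) :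
    ‖fderiv ℝ f x - fderiv ℝ f y‖ = ‖gradient f x - gradient f y‖ := by
  rw [← toDual_gradient, ← toDual_gradient, ← map_sub, LinearIsometryEquiv.norm_map]

theorem apply_add_le_of_norm_gradient_sub_le (hf : Differentiable ℝ f)
    (hlip : ∀ x y, ‖gradient f x - gradient f y‖ ≤ L * ‖x - y‖) (x v : E) :
    f (x + v) ≤ f x + inner ℝ (gradient f x) v + L / 2 * ‖v‖ ^ 2 := by
  rw [inner_gradient_left]
  exact apply_add_le_of_norm_fderiv_sub_le hf
    (fun y z => (norm_fderiv_sub_fderiv_eq_norm_gradient_sub_gradient f y z).trans_le (hlip y z))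
    x v

theorem apply_sub_smul_gradient_le (hf : Differentiable ℝ f)
    (hlip : ∀ x y, ‖gradient f x - gradient f y‖ ≤ L * ‖x - y‖) (x : E) (t : ℝ) :
    f (x - t • gradient f x) ≤ f x - t * (1 - L * t / 2) * ‖gradient f x‖ ^ 2 := by
  have := apply_add_le_of_norm_gradient_sub_le hf hlip x (-(t • gradient f x))
  rw [← sub_eq_add_neg, inner_neg_right, real_inner_smul_right, real_inner_self_eq_norm_sq,
    norm_neg, norm_smul, Real.norm_eq_abs, mul_pow, sq_abs] at this
  linarith

end Gradient

theorem summable_of_add_le_of_bddBelow {u d : ℕ → ℝ} (hu : BddBelow (range u))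
    (hd : ∀ k, 0 ≤ d k) (hstep : ∀ k, u (k + 1) + d k ≤ u k) : Summable d := by
  obtain ⟨c, hc⟩ := hu
  have hpartial : ∀ k, ∑ i ∈ Finset.range k, d i ≤ u 0 - u k := by
    intro k
    induction k with
    | zero => simp
    | succ k ih => rw [Finset.sum_range_succ]; linarith [hstep k]
  exact summable_of_sum_range_le hd fun k =>
    (hpartial k).trans (sub_le_sub_left (hc (mem_range_self k)) _)

theorem tendsto_zero_of_tendsto_norm_sq {α F : Type*} [SeminormedAddCommGroup F] {l : Filter α}
    {g : α → F} (h : Tendsto (fun a => ‖g a‖ ^ 2) l (nhds 0)) : Tendsto g l (nhds 0) := by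
  have := h.sqrt
  simp only [Real.sqrt_sq (norm_nonneg _), Real.sqrt_zero] at this
  exact tendsto_zero_iff_norm_tendsto_zero.mpr this

/-- If `f` is differentiable with `L`-Lipschitz gradient and bounded below, then the
gradient descent iterates `x_{k+1} = x_k − (1/L) ∇f(x_k)` satisfy `∇f(x_k) → 0`. -/
theorem gradient_descent_grad_tendsto_zero (n : ℕ)
    (f : EuclideanSpace ℝ (Fin n) → ℝ) (L : ℝ) (hL : 0 < L)
    (hdiff : Differentiable ℝ f)
    (hlip : ∀ x y : EuclideanSpace ℝ (Fin n),
      ‖gradient f x - gradient f y‖ ≤ L * ‖x - y‖)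
    (hbdd : BddBelow (Set.range f))
    (x : ℕ → EuclideanSpace ℝ (Fin n))
    (hiter : ∀ k : ℕ, x (k + 1) = x k - (1 / L) • gradient f (x k)) :
    Tendsto (fun k : ℕ => gradient f (x k)) atTop (nhds 0) := by
  have hdecrease : ∀ k, f (x (k + 1)) + ‖gradient f (x k)‖ ^ 2 / (2 * L) ≤ f (x k) := by
    intro k
    have hstep := apply_sub_smul_gradient_le hdiff hlip (x k) (1 / L)
    have hrate : 1 / L * (1 - L * (1 / L) / 2) = 1 / (2 * L) := by field_simp; ring
    rw [← hiter k, hrate, one_div_mul_eq_div] at hstep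
    linarith
  have hsum : Summable fun k => ‖gradient f (x k)‖ ^ 2 / (2 * L) :=
    summable_of_add_le_of_bddBelow (hbdd.mono (range_comp_subset_range x f))
      (fun k => by positivity) hdecrease
  refine tendsto_zero_of_tendsto_norm_sq ?_
  have := hsum.tendsto_atTop_zero.const_mul (2 * L)
  rw [mul_zero] at this
  exact this.congr fun k => mul_div_cancel₀ _ (by positivity)
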